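/- arXiv:2508.02368 — 4 statements merged into one kernel-verified Lean document; each statement's English description precedes it below -/
import Mathlib

section
/- Let f, g be complex numbers in the open unit disk and let λ be a complex number with |λ| = 1. Then the cubic polynomial z³ − (f + g + λ·conj(f)·conj(g))·z² + (f·g + λ·(conj(f) + conj(g)))·z − λ has all three of its roots on the unit circle. -/
/-!
Clearing denominators, the cubic says `B(z) = λ` for the degree-three Blaschke product
`B(z) = z · (z - f)/(1 - f̄ z) · (z - g)/(1 - ḡ z)`. Each factor `(z - a)/(1 - ā z)` with `|a| < 1`
(the factor `z` is the one with `a = 0`)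
has modulus `< 1` inside the unit disk and `> 1` outside, because
`|z - a|² - |1 - ā z|² = (|z|² - 1)(1 - |a|²)`; hence `|B(z)| = 1` forces `|z| = 1`.
-/

open ComplexConjugate

theorem Finset.prod_lt_prod_of_nonempty_of_nonneg {ι : Type*} {s : Finset ι} {f g : ι → ℝ}
    (hs : s.Nonempty) (hf : ∀ i ∈ s, 0 ≤ f i) (hfg : ∀ i ∈ s, f i < g i) :
    ∏ i ∈ s, f i < ∏ i ∈ s, g i := by
  induction hs using Finset.Nonempty.cons_induction with
  | singleton a => simpa using hfg a (mem_singleton_self a)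
  | cons a s ha _ ih =>
    simp only [prod_cons, forall_mem_cons] at hf hfg ⊢
    exact mul_lt_mul'' hfg.1 (ih hf.2 hfg.2) hf.1 (prod_nonneg hf.2)

namespace Complex

theorem norm_sub_sq_sub_norm_one_sub_conj_mul_sq (a z : ℂ) :
    ‖z - a‖ ^ 2 - ‖1 - conj a * z‖ ^ 2 = (‖z‖ ^ 2 - 1) * (1 - ‖a‖ ^ 2) := by
  simp only [Complex.sq_norm, normSq_apply, sub_re, sub_im, mul_re, mul_im, conj_re, conj_im,
    one_re, one_im]
  ring

theorem norm_sub_lt_norm_one_sub_conj_mul {a z : ℂ} (ha : ‖a‖ < 1) (hz : ‖z‖ < 1) :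
    ‖z - a‖ < ‖1 - conj a * z‖ := by
  have key := norm_sub_sq_sub_norm_one_sub_conj_mul_sq a z
  have : (‖z‖ ^ 2 - 1) * (1 - ‖a‖ ^ 2) < 0 :=
    mul_neg_of_neg_of_pos (by nlinarith [norm_nonneg z]) (by nlinarith [norm_nonneg a])
  exact (sq_lt_sq₀ (norm_nonneg _) (norm_nonneg _)).1 (by linarith)

theorem norm_one_sub_conj_mul_lt_norm_sub {a z : ℂ} (ha : ‖a‖ < 1) (hz : 1 < ‖z‖) :
    ‖1 - conj a * z‖ < ‖z - a‖ := by
  have key := norm_sub_sq_sub_norm_one_sub_conj_mul_sq a z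
  have : 0 < (‖z‖ ^ 2 - 1) * (1 - ‖a‖ ^ 2) :=
    mul_pos (by nlinarith) (by nlinarith [norm_nonneg a])
  exact (sq_lt_sq₀ (norm_nonneg _) (norm_nonneg _)).1 (by linarith)

theorem norm_eq_one_of_norm_prod_sub_eq {ι : Type*} {s : Finset ι} (hs : s.Nonempty)
    {a : ι → ℂ} (ha : ∀ i ∈ s, ‖a i‖ < 1) {z : ℂ}
    (h : ‖∏ i ∈ s, (z - a i)‖ = ‖∏ i ∈ s, (1 - conj (a i) * z)‖) : ‖z‖ = 1 := by
  simp only [norm_prod] at h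
  rcases lt_trichotomy ‖z‖ 1 with hz | hz | hz
  · refine absurd h (ne_of_lt ?_)
    exact Finset.prod_lt_prod_of_nonempty_of_nonneg hs (fun _ _ ↦ norm_nonneg _)
      fun i hi ↦ norm_sub_lt_norm_one_sub_conj_mul (ha i hi) hz
  · exact hz
  · refine absurd h (ne_of_gt ?_)
    exact Finset.prod_lt_prod_of_nonempty_of_nonneg hs (fun _ _ ↦ norm_nonneg _)
      fun i hi ↦ norm_one_sub_conj_mul_lt_norm_sub (ha i hi) hz

end Complex

/-- Symmetric parametrization of Poncelet triangles: for `f, g` in the open unit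
disk and `|λ| = 1`, every root of the cubic
`z³ − (f + g + λ·conj f·conj g)·z² + (f·g + λ·(conj f + conj g))·z − λ`
lies on the unit circle. -/
theorem poncelet_cubic_roots_on_unit_circle
    (f g l : ℂ) (hf : ‖f‖ < 1) (hg : ‖g‖ < 1)
    (hl : ‖l‖ = 1) (z : ℂ)
    (hz : z ^ 3 - (f + g + l * conj f * conj g) * z ^ 2
        + (f * g + l * (conj f + conj g)) * z - l = 0) :
    ‖z‖ = 1 := by
  have blaschke : ∏ i, (z - ![0, f, g] i) = l * ∏ i, (1 - conj (![0, f, g] i) * z) := by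
    simp only [Fin.prod_univ_three, Matrix.cons_val, map_zero]
    linear_combination hz
  refine Complex.norm_eq_one_of_norm_prod_sub_eq Finset.univ_nonempty (fun i _ ↦ ?_)
    (by rw [blaschke, norm_mul, hl, one_mul])
  fin_cases i <;> simp [hf, hg]
end

section
/- Let z₁, z₂, z₃ be distinct points on the unit circle in ℂ and let P ∈ ℂ with |P| ≠ 1. With σ₁ = z₁ + z₂ + z₃, σ₂ = z₁z₂ + z₂z₃ + z₃z₁, σ₃ = z₁z₂z₃, the isogonal conjugate of P with respect to the triangle z₁z₂z₃ equals (conj(P)²·σ₃ − conj(P)·σ₂ + σ₁ − P)/(1 − |P|²). -/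
open ComplexConjugate

/-! On the unit circle `conj z = z⁻¹`, so the squared sidelengths
`‖z_j - z_k‖² = (z_j - z_k)(z_j⁻¹ - z_k⁻¹)` and `conj P = u z₁⁻¹ + v z₂⁻¹ + w z₃⁻¹` are rational
functions of the vertices and the barycentric coordinates. Weaver's formula thereby becomes an
identity of rational functions, valid in any field once `w = 1 - u - v` is eliminated. -/

theorem weaver_identity {K : Type*} [Field K] {z₁ z₂ z₃ u v w P Q : K}
    (hz₁ : z₁ ≠ 0) (hz₂ : z₂ ≠ 0) (hz₃ : z₃ ≠ 0) (hu : u ≠ 0) (hv : v ≠ 0) (hw : w ≠ 0)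
    (hsum : u + v + w = 1) (hP : P = u * z₁ + v * z₂ + w * z₃)
    (hQ : Q = u * z₁⁻¹ + v * z₂⁻¹ + w * z₃⁻¹) :
    ((z₂ - z₃) * (z₂⁻¹ - z₃⁻¹) / u * z₁ + (z₃ - z₁) * (z₃⁻¹ - z₁⁻¹) / v * z₂
        + (z₁ - z₂) * (z₁⁻¹ - z₂⁻¹) / w * z₃) * (1 - P * Q)
      = (Q ^ 2 * (z₁ * z₂ * z₃) - Q * (z₁ * z₂ + z₂ * z₃ + z₃ * z₁) + (z₁ + z₂ + z₃) - P)
        * ((z₂ - z₃) * (z₂⁻¹ - z₃⁻¹) / u + (z₃ - z₁) * (z₃⁻¹ - z₁⁻¹) / v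
          + (z₁ - z₂) * (z₁⁻¹ - z₂⁻¹) / w) := by
  obtain rfl : w = 1 - u - v := by linear_combination hsum
  subst hP hQ
  field_simp
  ring

namespace Complex

theorem sq_norm_sub_of_norm_eq_one {a b : ℂ} (ha : ‖a‖ = 1) (hb : ‖b‖ = 1) :
    (‖a - b‖ : ℂ) ^ 2 = (a - b) * (a⁻¹ - b⁻¹) := by
  rw [← mul_conj', map_sub, ← inv_eq_conj ha, ← inv_eq_conj hb]

theorem conj_affine_comb_of_norm_eq_one {z₁ z₂ z₃ : ℂ} (h₁ : ‖z₁‖ = 1) (h₂ : ‖z₂‖ = 1)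
    (h₃ : ‖z₃‖ = 1) (u v w : ℝ) :
    conj ((u : ℂ) * z₁ + v * z₂ + w * z₃) = u * z₁⁻¹ + v * z₂⁻¹ + w * z₃⁻¹ := by
  simp [inv_eq_conj, h₁, h₂, h₃]

theorem one_sub_sq_norm_ne_zero {P : ℂ} (hP : ‖P‖ ≠ 1) : (1 : ℂ) - (‖P‖ : ℂ) ^ 2 ≠ 0 := by
  norm_cast
  rw [sub_eq_zero, eq_comm, pow_eq_one_iff_of_nonneg (norm_nonneg P) two_ne_zero]
  exact hP

end Complex

theorem weaver_isogonal_formula_general (z₁ z₂ z₃ P : ℂ)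
    (h₁ : ‖z₁‖ = 1) (h₂ : ‖z₂‖ = 1) (h₃ : ‖z₃‖ = 1)
    (hP : ‖P‖ ≠ 1)
    (u v w : ℝ) (hu : u ≠ 0) (hv : v ≠ 0) (hw : w ≠ 0)
    (hsum : u + v + w = 1)
    (hbary : P = (u : ℂ) * z₁ + (v : ℂ) * z₂ + (w : ℂ) * z₃)
    (s : ℝ)
    (hs : s = (‖z₂ - z₃‖) ^ 2 / u + (‖z₃ - z₁‖) ^ 2 / v
        + (‖z₁ - z₂‖) ^ 2 / w)
    (hs0 : s ≠ 0) :
    (((‖z₂ - z₃‖) ^ 2 / u : ℝ) : ℂ) / (s : ℂ) * z₁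
      + (((‖z₃ - z₁‖) ^ 2 / v : ℝ) : ℂ) / (s : ℂ) * z₂
      + (((‖z₁ - z₂‖) ^ 2 / w : ℝ) : ℂ) / (s : ℂ) * z₃
    = ((conj P) ^ 2 * (z₁ * z₂ * z₃)
        - conj P * (z₁ * z₂ + z₂ * z₃ + z₃ * z₁) + (z₁ + z₂ + z₃) - P)
      / ((1 : ℂ) - ((‖P‖ : ℝ) : ℂ) ^ 2) := by
  have hne : ∀ {z : ℂ}, ‖z‖ = 1 → z ≠ 0 := fun hz ↦ norm_ne_zero_iff.mp (by simp [hz])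
  have hsC : (s : ℂ) ≠ 0 := by exact_mod_cast hs0
  have hconj : conj P = u * z₁⁻¹ + v * z₂⁻¹ + w * z₃⁻¹ := by
    rw [hbary, Complex.conj_affine_comb_of_norm_eq_one h₁ h₂ h₃]
  simp only [div_mul_eq_mul_div, ← add_div]
  rw [div_eq_div_iff hsC (Complex.one_sub_sq_norm_ne_zero hP), ← Complex.mul_conj', hconj, hs]
  push_cast
  simp only [Complex.sq_norm_sub_of_norm_eq_one, h₁, h₂, h₃]
  exact weaver_identity (hne h₁) (hne h₂) (hne h₃) (by exact_mod_cast hu) (by exact_mod_cast hv)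
    (by exact_mod_cast hw) (by exact_mod_cast hsum) hbary rfl

/-- Weaver's formula: for a triangle `z₁z₂z₃` inscribed in the unit circle and a
point `P` with `|P| ≠ 1`, the isogonal conjugate of `P` (given in barycentric
coordinates `[l₁²/u : l₂²/v : l₃²/w]` where `[u : v : w]` are barycentrics of
`P` and `lᵢ` the sidelengths) equals
`(conj(P)²σ₃ − conj(P)σ₂ + σ₁ − P)/(1 − |P|²)`. -/
theorem weaver_isogonal_formula (z₁ z₂ z₃ P : ℂ)
    (h₁ : ‖z₁‖ = 1) (h₂ : ‖z₂‖ = 1) (h₃ : ‖z₃‖ = 1)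
    (h12 : z₁ ≠ z₂) (h23 : z₂ ≠ z₃) (h13 : z₁ ≠ z₃)
    (hP : ‖P‖ ≠ 1)
    (u v w : ℝ) (hu : u ≠ 0) (hv : v ≠ 0) (hw : w ≠ 0)
    (hsum : u + v + w = 1)
    (hbary : P = (u : ℂ) * z₁ + (v : ℂ) * z₂ + (w : ℂ) * z₃)
    (s : ℝ)
    (hs : s = (‖z₂ - z₃‖) ^ 2 / u + (‖z₃ - z₁‖) ^ 2 / v
        + (‖z₁ - z₂‖) ^ 2 / w)
    (hs0 : s ≠ 0) :
    (((‖z₂ - z₃‖) ^ 2 / u : ℝ) : ℂ) / (s : ℂ) * z₁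
      + (((‖z₃ - z₁‖) ^ 2 / v : ℝ) : ℂ) / (s : ℂ) * z₂
      + (((‖z₁ - z₂‖) ^ 2 / w : ℝ) : ℂ) / (s : ℂ) * z₃
    = ((conj P) ^ 2 * (z₁ * z₂ * z₃)
        - conj P * (z₁ * z₂ + z₂ * z₃ + z₃ * z₁) + (z₁ + z₂ + z₃) - P)
      / ((1 : ℂ) - ((‖P‖ : ℝ) : ℂ) ^ 2) :=
  weaver_isogonal_formula_general z₁ z₂ z₃ P h₁ h₂ h₃ hP u v w hu hv hw hsum hbary s hs hs0
end

section
/- Fix f, g in the open unit disk and a point P ∈ ℂ with |P| < 1, P ≠ f, P ≠ g. For λ on the unit circle let P†(λ) = (conj(P)²·λ − conj(P)·(fg + λ(conj f + conj g)) + (f + g + λ·conj(f)·conj(g)) − P)/(1 − |P|²). Then as λ ranges over the unit circle, P†(λ) traces the circle centered at O† = (f + g − f·g·conj(P) − P)/(1 − |P|²) with radius r† = |(conj(g) − conj(P))·(conj(f) − conj(P))| / |1 − |P|²|. -/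
/-! The numerator of `P†(λ)` is that of `O†` plus `λ (conj g - conj P) (conj f - conj P)`, so
`P†(λ) = O† + λ a` for a fixed `a`, and `λ ↦ O† + λ a` maps the unit circle onto the circle of
radius `‖a‖` about `O†`. -/

open ComplexConjugate

theorem Complex.exists_norm_eq_one_and_eq_mul_of_norm_eq {a w : ℂ} (h : ‖w‖ = ‖a‖) :
    ∃ l : ℂ, ‖l‖ = 1 ∧ w = l * a := by
  rcases eq_or_ne a 0 with rfl | ha
  · exact ⟨1, norm_one, by simpa using h⟩
  · refine ⟨w / a, ?_, (div_mul_cancel₀ w ha).symm⟩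
    rw [norm_div, h, div_self (norm_ne_zero_iff.mpr ha)]

theorem Complex.setOf_add_unit_mul_eq_sphere (c a : ℂ) :
    {z : ℂ | ∃ l : ℂ, ‖l‖ = 1 ∧ z = c + l * a} = Metric.sphere c ‖a‖ := by
  ext z
  simp only [Set.mem_ofPred_eq, Metric.mem_sphere, dist_eq_norm]
  constructor
  · rintro ⟨l, hl, rfl⟩
    rw [add_sub_cancel_left, norm_mul, hl, one_mul]
  · intro hz
    obtain ⟨l, hl, hzl⟩ := Complex.exists_norm_eq_one_and_eq_mul_of_norm_eq hz
    exact ⟨l, hl, by rw [← hzl, add_sub_cancel]⟩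

theorem isogonal_numerator_eq (f g P l : ℂ) :
    (conj P) ^ 2 * l - conj P * (f * g + l * (conj f + conj g))
        + (f + g + l * conj f * conj g) - P
      = (f + g - f * g * conj P - P) + l * ((conj g - conj P) * (conj f - conj P)) := by
  ring

theorem Complex.norm_one_sub_ofReal_sq (x : ℝ) : ‖(1 : ℂ) - (x : ℂ) ^ 2‖ = |1 - x ^ 2| := by
  rw [← Complex.ofReal_one, ← Complex.ofReal_pow, ← Complex.ofReal_sub, Complex.norm_real,
    Real.norm_eq_abs]

theorem isogonal_locus_circle_general (f g P : ℂ) :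
    {z : ℂ | ∃ l : ℂ, ‖l‖ = 1 ∧
        z = ((conj P) ^ 2 * l - conj P * (f * g + l * (conj f + conj g))
              + (f + g + l * conj f * conj g) - P)
            / ((1 : ℂ) - ((‖P‖ : ℝ) : ℂ) ^ 2)}
      = Metric.sphere
          ((f + g - f * g * conj P - P) / ((1 : ℂ) - ((‖P‖ : ℝ) : ℂ) ^ 2))
          (‖(conj g - conj P) * (conj f - conj P)‖
            / |1 - (‖P‖) ^ 2|) := by
  simp_rw [isogonal_numerator_eq, add_div, mul_div_assoc]
  rw [Complex.setOf_add_unit_mul_eq_sphere, ← mul_div_assoc, norm_div,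
    Complex.norm_one_sub_ofReal_sq]

/-- Locus of the isogonal conjugate over the Poncelet family inscribed in the
unit circle with caustic foci `f, g`: as `λ` traverses the unit circle,
`P†(λ)` traces the circle centered at `(f + g − fg·conj P − P)/(1 − |P|²)` of
radius `|(conj g − conj P)(conj f − conj P)|/|1 − |P|²|`. -/
theorem isogonal_locus_circle (f g P : ℂ)
    (hf : ‖f‖ < 1) (hg : ‖g‖ < 1) (hP : ‖P‖ < 1)
    (hPf : P ≠ f) (hPg : P ≠ g) :
    {z : ℂ | ∃ l : ℂ, ‖l‖ = 1 ∧
        z = ((conj P) ^ 2 * l - conj P * (f * g + l * (conj f + conj g))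
              + (f + g + l * conj f * conj g) - P)
            / ((1 : ℂ) - ((‖P‖ : ℝ) : ℂ) ^ 2)}
      = Metric.sphere
          ((f + g - f * g * conj P - P) / ((1 : ℂ) - ((‖P‖ : ℝ) : ℂ) ^ 2))
          (‖(conj g - conj P) * (conj f - conj P)‖
            / |1 - (‖P‖) ^ 2|) :=
  isogonal_locus_circle_general f g P
end

section
/- Let f = f_x + i f_y and g = g_x + i g_y lie in the open unit disk. Then the quartic polynomial q(t) = (f_x g_y + f_y g_x + f_y + g_y)t⁴ + (−2f_x − 2g_x − 4)t³ + (2f_x g_y + 2f_y g_x)t² + (−2f_x − 2g_x + 4)t + (g_y f_x + f_y g_x − f_y − g_y) has four real roots (counted with multiplicity); equivalently, all complex roots of q are real. -/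
open Complex in
set_option maxHeartbeats 1000000 in
/-- For `f = f_x + i f_y`, `g = g_x + i g_y` in the open unit disk, every
complex root of the quartic
`(f_x g_y + f_y g_x + f_y + g_y)t⁴ + (−2f_x − 2g_x − 4)t³
 + (2f_x g_y + 2f_y g_x)t² + (−2f_x − 2g_x + 4)t + (g_y f_x + f_y g_x − f_y − g_y)`
is real. -/
theorem tangency_quartic_all_roots_real (f_x f_y g_x g_y : ℝ)
    (hf : f_x ^ 2 + f_y ^ 2 < 1) (hg : g_x ^ 2 + g_y ^ 2 < 1) :
    ∀ z : ℂ,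
      ((f_x * g_y + f_y * g_x + f_y + g_y : ℝ) : ℂ) * z ^ 4
        + ((-2 * f_x - 2 * g_x - 4 : ℝ) : ℂ) * z ^ 3
        + ((2 * f_x * g_y + 2 * f_y * g_x : ℝ) : ℂ) * z ^ 2
        + ((-2 * f_x - 2 * g_x + 4 : ℝ) : ℂ) * z
        + ((g_y * f_x + f_y * g_x - f_y - g_y : ℝ) : ℂ) = 0 →
      z.im = 0 := by
  intro z h
  by_contra hy
  set x : ℝ := z.re with hxdef
  set y : ℝ := z.im with hydef
  have hz : z = (x : ℂ) + (y : ℂ) * I := (Complex.re_add_im z).symm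
  have h' : ((f_x * g_y + f_y * g_x + f_y + g_y : ℝ) : ℂ) * (z * z * z * z)
        + ((-2 * f_x - 2 * g_x - 4 : ℝ) : ℂ) * (z * z * z)
        + ((2 * f_x * g_y + 2 * f_y * g_x : ℝ) : ℂ) * (z * z)
        + ((-2 * f_x - 2 * g_x + 4 : ℝ) : ℂ) * z
        + ((g_y * f_x + f_y * g_x - f_y - g_y : ℝ) : ℂ) = 0 := by
    linear_combination h
  rw [hz] at h'
  have h1 := congrArg Complex.re h'
  have h2 := congrArg Complex.im h'
  simp only [Complex.add_re, Complex.add_im, Complex.sub_re, Complex.sub_im,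
    Complex.mul_re, Complex.mul_im, Complex.one_re, Complex.one_im, Complex.I_re,
    Complex.I_im, Complex.ofReal_re, Complex.ofReal_im, Complex.neg_re, Complex.neg_im, Complex.zero_re,
    Complex.zero_im, Complex.ofReal_mul, Complex.ofReal_add, Complex.ofReal_sub,
    Complex.ofReal_neg] at h1 h2
  set f : ℂ := (f_x : ℂ) + (f_y : ℂ) * I with hfdef
  set g : ℂ := (g_x : ℂ) + (g_y : ℂ) * I with hgdef
  set fb : ℂ := (f_x : ℂ) - (f_y : ℂ) * I with hfbdef
  set gb : ℂ := (g_x : ℂ) - (g_y : ℂ) * I with hgbdef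
  have hAB : ((1 - f) + I * (1 + f) * z) * (((1 - g) + I * (1 + g) * z) * ((1 + I * z) * (1 + I * z)))
      = ((1 - fb) - I * (1 + fb) * z) * (((1 - gb) - I * (1 + gb) * z) * ((1 - I * z) * (1 - I * z))) := by
    rw [hz, hfdef, hgdef, hfbdef, hgbdef]
    refine Complex.ext ?_ ?_
    · simp only [Complex.add_re, Complex.add_im, Complex.sub_re, Complex.sub_im,
        Complex.mul_re, Complex.mul_im, Complex.one_re, Complex.one_im, Complex.I_re,
        Complex.I_im, Complex.ofReal_re, Complex.ofReal_im, Complex.neg_re, Complex.neg_im]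
      linear_combination (-2 : ℝ) * h2
    · simp only [Complex.add_re, Complex.add_im, Complex.sub_re, Complex.sub_im,
        Complex.mul_re, Complex.mul_im, Complex.one_re, Complex.one_im, Complex.I_re,
        Complex.I_im, Complex.ofReal_re, Complex.ofReal_im, Complex.neg_re, Complex.neg_im]
      linear_combination (2 : ℝ) * h1
  set P1 : ℝ := Complex.normSq ((1 - f) + I * (1 + f) * z) with hP1
  set P2 : ℝ := Complex.normSq ((1 - g) + I * (1 + g) * z) with hP2
  set P3 : ℝ := Complex.normSq (1 + I * z) with hP3
  set Q1 : ℝ := Complex.normSq ((1 - fb) - I * (1 + fb) * z) with hQ1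
  set Q2 : ℝ := Complex.normSq ((1 - gb) - I * (1 + gb) * z) with hQ2
  set Q3 : ℝ := Complex.normSq (1 - I * z) with hQ3
  have hprod : P1 * (P2 * (P3 * P3)) = Q1 * (Q2 * (Q3 * Q3)) := by
    rw [hP1, hP2, hP3, hQ1, hQ2, hQ3]
    rw [← Complex.normSq_mul, ← Complex.normSq_mul, ← Complex.normSq_mul,
      ← Complex.normSq_mul, ← Complex.normSq_mul, ← Complex.normSq_mul, hAB]
  have hd1 : Q1 = P1 + 4 * y * (1 - (f_x ^ 2 + f_y ^ 2)) := by
    rw [hP1, hQ1, hz, hfdef, hfbdef]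
    simp only [Complex.normSq_apply, Complex.add_re, Complex.add_im, Complex.sub_re,
      Complex.sub_im, Complex.mul_re, Complex.mul_im, Complex.one_re, Complex.one_im,
      Complex.I_re, Complex.I_im, Complex.ofReal_re, Complex.ofReal_im, Complex.neg_re, Complex.neg_im]
    ring
  have hd2 : Q2 = P2 + 4 * y * (1 - (g_x ^ 2 + g_y ^ 2)) := by
    rw [hP2, hQ2, hz, hgdef, hgbdef]
    simp only [Complex.normSq_apply, Complex.add_re, Complex.add_im, Complex.sub_re,
      Complex.sub_im, Complex.mul_re, Complex.mul_im, Complex.one_re, Complex.one_im,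
      Complex.I_re, Complex.I_im, Complex.ofReal_re, Complex.ofReal_im, Complex.neg_re, Complex.neg_im]
    ring
  have hd3 : Q3 = P3 + 4 * y := by
    rw [hP3, hQ3, hz]
    simp only [Complex.normSq_apply, Complex.add_re, Complex.add_im, Complex.sub_re,
      Complex.sub_im, Complex.mul_re, Complex.mul_im, Complex.one_re, Complex.one_im,
      Complex.I_re, Complex.I_im, Complex.ofReal_re, Complex.ofReal_im, Complex.neg_re, Complex.neg_im]
    ring
  have hP1n : 0 ≤ P1 := Complex.normSq_nonneg _
  have hP2n : 0 ≤ P2 := Complex.normSq_nonneg _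
  have hP3n : 0 ≤ P3 := Complex.normSq_nonneg _
  have hQ1n : 0 ≤ Q1 := Complex.normSq_nonneg _
  have hQ2n : 0 ≤ Q2 := Complex.normSq_nonneg _
  have hQ3n : 0 ≤ Q3 := Complex.normSq_nonneg _
  have hfpos : 0 < 1 - (f_x ^ 2 + f_y ^ 2) := by linarith
  have hgpos : 0 < 1 - (g_x ^ 2 + g_y ^ 2) := by linarith
  clear h h' h1 h2 hAB hz
  rcases lt_or_gt_of_ne hy with hneg | hpos
  · -- y < 0 : Qi < Pi
    have l1 : Q1 < P1 := by nlinarith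
    have l2 : Q2 < P2 := by nlinarith
    have l3 : Q3 < P3 := by nlinarith
    have := mul_lt_mul'' l1 (mul_lt_mul'' l2 (mul_lt_mul'' l3 l3 hQ3n hQ3n) hQ2n (mul_nonneg hQ3n hQ3n)) hQ1n (mul_nonneg hQ2n (mul_nonneg hQ3n hQ3n))
    linarith
  · -- y > 0 : Pi < Qi
    have l1 : P1 < Q1 := by nlinarith
    have l2 : P2 < Q2 := by nlinarith
    have l3 : P3 < Q3 := by nlinarith
    have := mul_lt_mul'' l1 (mul_lt_mul'' l2 (mul_lt_mul'' l3 l3 hP3n hP3n) hP2n (mul_nonneg hP3n hP3n)) hP1n (mul_nonneg hP2n (mul_nonneg hP3n hP3n))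
    linarith
end
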